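/- arXiv:2603.03172 — 6 statements merged into one kernel-verified Lean document; each statement's English description precedes it below -/
import Mathlib

section
/- Let n ≥ 3 be odd, B > 0, and let R = {x_1, …, x_n} be a multiset of real numbers with x_i ∈ [0, B] for all i. Let x_(1) ≤ ⋯ ≤ x_(n) denote the sorted values and m = (n+1)/2, so that median(R) = x_(m). Then the retain sensitivity of the median under adding one point from [0, B], namely max over x ∈ [0, B] of |median(R ∪ {x}) − median(R)|, equals (1/2)·max{ x_(m+1) − x_(m), x_(m) − x_(m−1) }. -/
/-!
Inserting `x` into the sorted list `x_(1) ≤ ⋯ ≤ x_(n)` makes the two middle entries of the new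
list equal to `x` clamped to `[x_(m-1), x_(m)]` and `x` clamped to `[x_(m), x_(m+1)]`. At most one
of these clamps differs from `x_(m)`, so the median moves by at most half of one of the two gaps
around `x_(m)`, and `x = 0` resp. `x = B` realise the two gaps exactly.
-/

/-- The median of a finite multiset of reals: the middle sorted value for odd size,
and the average of the two middle sorted values for even size. -/
noncomputable def mmedian (s : Multiset ℝ) : ℝ :=
  if s.card % 2 = 1 then (s.sort (· ≤ ·)).getD ((s.card - 1) / 2) 0
  else ((s.sort (· ≤ ·)).getD (s.card / 2 - 1) 0 + (s.sort (· ≤ ·)).getD (s.card / 2) 0) / 2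

theorem Multiset.sort_cons_eq_orderedInsert {α : Type*} (r : α → α → Prop) [DecidableRel r]
    [IsTrans α r] [Std.Antisymm r] [Std.Total r] (a : α) (s : Multiset α) :
    (a ::ₘ s).sort r = (s.sort r).orderedInsert r a :=
  Quot.inductionOn s fun l => by
    simp only [Multiset.quot_mk_to_coe'', Multiset.cons_coe, Multiset.coe_sort,
      List.mergeSort_eq_insertionSort, List.insertionSort_cons]

namespace List

variable {α : Type*} [LinearOrder α]

theorem getD_orderedInsert_cons_zero (x b d : α) (l : List α) :
    ((b :: l).orderedInsert (· ≤ ·) x).getD 0 d = min x b := by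
  by_cases h : x ≤ b <;> simp [h, min_def]

theorem Pairwise.getD_le_getD {l : List α} (hl : l.Pairwise (· ≤ ·)) (d : α) {i j : ℕ}
    (hij : i ≤ j) (hj : j < l.length) : l.getD i d ≤ l.getD j d := by
  rw [getD_eq_getElem _ _ (hij.trans_lt hj), getD_eq_getElem _ _ hj]
  rcases hij.eq_or_lt with rfl | h
  · exact le_rfl
  · exact pairwise_iff_getElem.1 hl _ _ _ _ h

theorem Pairwise.getD_orderedInsert_succ {l : List α} (hl : l.Pairwise (· ≤ ·)) (x d : α)
    {k : ℕ} (hk : k + 1 < l.length) :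
    (l.orderedInsert (· ≤ ·) x).getD (k + 1) d =
      max (l.getD k d) (min x (l.getD (k + 1) d)) := by
  induction l generalizing k with
  | nil => simp at hk
  | cons a l ih =>
    rw [pairwise_cons] at hl
    by_cases hxa : x ≤ a
    · have hak : a ≤ (a :: l).getD k d := by
        rcases k with _ | k
        · simp
        · have hkl : k < l.length := by simp at hk; omega
          rw [getD_cons_succ, getD_eq_getElem _ _ hkl]
          exact hl.1 _ (getElem_mem hkl)
      simp only [orderedInsert_cons, hxa, if_true, getD_cons_succ]
      exact (max_eq_left ((min_le_left _ _).trans (hxa.trans hak))).symm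
    · simp only [orderedInsert_cons, hxa, if_false, getD_cons_succ]
      rcases k with _ | k
      · obtain ⟨b, l, rfl⟩ := exists_cons_of_length_pos (by simpa using hk)
        rw [getD_orderedInsert_cons_zero, getD_cons_zero, getD_cons_zero,
          max_eq_right (le_min (le_of_not_ge hxa) (hl.1 b mem_cons_self))]
      · exact ih hl.2 (by simpa using hk)

end List

theorem mmedian_of_card_eq_odd {s : Multiset ℝ} {k : ℕ} (hs : s.card = 2 * k + 1) :
    mmedian s = (s.sort (· ≤ ·)).getD k 0 := by
  rw [mmedian, hs, if_pos (by omega), show (2 * k + 1 - 1) / 2 = k by omega]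

theorem mmedian_of_card_eq_even {s : Multiset ℝ} {k : ℕ} (hs : s.card = 2 * k + 2) :
    mmedian s = ((s.sort (· ≤ ·)).getD k 0 + (s.sort (· ≤ ·)).getD (k + 1) 0) / 2 := by
  rw [mmedian, hs, if_neg (by omega), show (2 * k + 2) / 2 - 1 = k by omega,
    show (2 * k + 2) / 2 = k + 1 by omega]

open Set in
theorem isGreatest_abs_avg_clamp_sub {a b c B : ℝ} (ha : 0 ≤ a) (hab : a ≤ b) (hbc : b ≤ c)
    (hc : c ≤ B) :
    IsGreatest ((fun x => |(max a (min x b) + max b (min x c)) / 2 - b|) '' Icc 0 B)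
      ((1 / 2) * max (c - b) (b - a)) := by
  refine ⟨?_, ?_⟩
  · have hb : 0 ≤ b := ha.trans hab
    rcases le_total (b - a) (c - b) with h | h
    · refine ⟨B, ⟨by linarith, le_rfl⟩, ?_⟩
      dsimp only
      rw [min_eq_right (hbc.trans hc), max_eq_right hab, min_eq_right hc, max_eq_right hbc,
        max_eq_left h, abs_of_nonneg (by linarith)]
      ring
    · refine ⟨0, ⟨le_rfl, by linarith⟩, ?_⟩
      dsimp only
      rw [min_eq_left hb, max_eq_left ha, min_eq_left (hb.trans hbc), max_eq_left hb,
        max_eq_right h, abs_of_nonpos (by linarith)]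
      ring
  · rintro _ ⟨x, -, rfl⟩
    simp only [abs_le, max_def, min_def]
    constructor <;> split_ifs <;> linarith

theorem stmt1_general (n : ℕ) (hn : 3 ≤ n) (hodd : Odd n) (B : ℝ)
    (R : Multiset ℝ) (hcard : R.card = n) (hmem : ∀ x ∈ R, x ∈ Set.Icc (0 : ℝ) B) :
    IsGreatest ((fun x => |mmedian (x ::ₘ R) - mmedian R|) '' Set.Icc (0 : ℝ) B)
      ((1 / 2) *
        max ((R.sort (· ≤ ·)).getD ((n + 1) / 2) 0 - (R.sort (· ≤ ·)).getD ((n - 1) / 2) 0)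
          ((R.sort (· ≤ ·)).getD ((n - 1) / 2) 0 -
            (R.sort (· ≤ ·)).getD ((n - 1) / 2 - 1) 0)) := by
  obtain ⟨k, rfl⟩ : ∃ k, n = 2 * k + 3 := by
    obtain ⟨j, rfl⟩ := hodd
    exact ⟨j - 1, by omega⟩
  set l := R.sort (· ≤ ·)
  have hsorted : l.Pairwise (· ≤ ·) := Multiset.pairwise_sort _ _
  have hlen : l.length = 2 * k + 3 := by rw [Multiset.length_sort, hcard]
  have hbounds : ∀ i < l.length, l.getD i 0 ∈ Set.Icc 0 B := fun i hi => by
    rw [List.getD_eq_getElem _ _ hi]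
    exact hmem _ ((Multiset.mem_sort _).1 (List.getElem_mem hi))
  have hshift : ∀ x, mmedian (x ::ₘ R) - mmedian R =
      (max (l.getD k 0) (min x (l.getD (k + 1) 0)) +
        max (l.getD (k + 1) 0) (min x (l.getD (k + 2) 0))) / 2 - l.getD (k + 1) 0 := by
    intro x
    rw [mmedian_of_card_eq_even (k := k + 1) (by rw [Multiset.card_cons, hcard]; ring),
      mmedian_of_card_eq_odd (k := k + 1) hcard, Multiset.sort_cons_eq_orderedInsert,
      hsorted.getD_orderedInsert_succ x 0 (by omega),
      hsorted.getD_orderedInsert_succ x 0 (by omega)]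
  simp only [hshift, show (2 * k + 3 + 1) / 2 = k + 2 by omega,
    show (2 * k + 3 - 1) / 2 = k + 1 by omega, Nat.add_sub_cancel]
  exact isGreatest_abs_avg_clamp_sub (hbounds k (by omega)).1
    (hsorted.getD_le_getD 0 (by omega) (by omega)) (hsorted.getD_le_getD 0 (by omega) (by omega))
    (hbounds (k + 2) (by omega)).2

/-- For an odd-size multiset `R ⊆ [0,B]` with sorted values `x_(1) ≤ ⋯ ≤ x_(n)` and
`m = (n+1)/2`, the retain sensitivity of the median under adding one point from `[0,B]`
equals `(1/2)·max{x_(m+1) − x_(m), x_(m) − x_(m−1)}`.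
(Here 1-indexed `x_(i)` is the 0-indexed entry `i − 1` of the sorted list, so
`x_(m) = sorted[(n−1)/2]`, `x_(m+1) = sorted[(n+1)/2]`, `x_(m−1) = sorted[(n−1)/2 − 1]`.) -/
theorem stmt1 (n : ℕ) (hn : 3 ≤ n) (hodd : Odd n) (B : ℝ) (hB : 0 < B)
    (R : Multiset ℝ) (hcard : R.card = n) (hmem : ∀ x ∈ R, x ∈ Set.Icc (0 : ℝ) B) :
    IsGreatest ((fun x => |mmedian (x ::ₘ R) - mmedian R|) '' Set.Icc (0 : ℝ) B)
      ((1 / 2) *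
        max ((R.sort (· ≤ ·)).getD ((n + 1) / 2) 0 - (R.sort (· ≤ ·)).getD ((n - 1) / 2) 0)
          ((R.sort (· ≤ ·)).getD ((n - 1) / 2) 0 -
            (R.sort (· ≤ ·)).getD ((n - 1) / 2 - 1) 0)) :=
  stmt1_general n hn hodd B R hcard hmem
end

section
/- Let B > 0. (i) For every multiset S of odd size n ≥ 3 of real numbers contained in [0, B] and every x ∈ [0, B], one has |median(S ∪ {x}) − median(S)| ≤ B/2. (ii) This bound is attained: there exist an odd n ≥ 3, a multiset S ⊆ [0, B] of size n, and x ∈ [0, B] with |median(S ∪ {x}) − median(S)| = B/2. -/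
namespace List

variable {α : Type*} [Preorder α] {l : List α}

theorem Pairwise.getElem_le_getElem_eraseIdx (hl : l.Pairwise (· ≤ ·)) {p i : ℕ}
    (hi : i < (l.eraseIdx p).length) :
    l[i]'(by grind [length_eraseIdx]) ≤ (l.eraseIdx p)[i] := by
  rw [getElem_eraseIdx]
  split_ifs
  · exact le_rfl
  · exact hl.sortedLE.getElem_le_getElem_of_le i.le_succ

theorem Pairwise.getElem_eraseIdx_le_getElem_add_one (hl : l.Pairwise (· ≤ ·)) {p i : ℕ}
    (hi : i + 1 < l.length) :
    (l.eraseIdx p)[i]'(by grind [length_eraseIdx]) ≤ l[i + 1] := by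
  rw [getElem_eraseIdx]
  split_ifs
  · exact hl.sortedLE.getElem_le_getElem_of_le i.le_succ
  · exact le_rfl

end List

namespace Multiset

theorem getElem_sort_mem {α : Type*} (r : α → α → Prop) [DecidableRel r] [IsTrans α r]
    [Std.Antisymm r] [Std.Total r] {s : Multiset α} {i : ℕ} (hi : i < (s.sort r).length) :
    (s.sort r)[i] ∈ s :=
  (mem_sort r).mp (List.getElem_mem hi)

theorem exists_eraseIdx_sort_cons_eq_sort {α : Type*} [LinearOrder α] (x : α) (s : Multiset α) :
    ∃ p, ((x ::ₘ s).sort (· ≤ ·)).eraseIdx p = s.sort (· ≤ ·) := by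
  refine ⟨_, (List.eraseIdx_idxOf_eq_erase x _).trans ?_⟩
  refine List.Perm.eq_of_pairwise' ((pairwise_sort _ _).sublist (List.erase_sublist ..))
    (pairwise_sort _ _) (coe_eq_coe.mp ?_)
  rw [← coe_erase, sort_eq, sort_eq, erase_cons_head]

end Multiset

theorem mmedian_of_card_eq_two_mul_add_one {S : Multiset ℝ} {k : ℕ} (h : S.card = 2 * k + 1) :
    mmedian S = (S.sort (· ≤ ·))[k]'(by rw [Multiset.length_sort]; omega) := by
  have hidx : (S.card - 1) / 2 = k := by omega
  rw [mmedian, if_pos (by omega), hidx, List.getD_eq_getElem]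

theorem mmedian_of_card_eq_two_mul_add_two {S : Multiset ℝ} {k : ℕ} (h : S.card = 2 * k + 2) :
    mmedian S = ((S.sort (· ≤ ·))[k]'(by rw [Multiset.length_sort]; omega) +
      (S.sort (· ≤ ·))[k + 1]'(by rw [Multiset.length_sort]; omega)) / 2 := by
  have hidx : S.card / 2 = k + 1 := by omega
  rw [mmedian, if_neg (by omega), hidx, Nat.add_sub_cancel, List.getD_eq_getElem,
    List.getD_eq_getElem]

theorem abs_mmedian_cons_sub_mmedian_le {S : Multiset ℝ} (hS : Odd S.card) {a b : ℝ}
    (hSab : ∀ y ∈ S, y ∈ Set.Icc a b) {x : ℝ} (hx : x ∈ Set.Icc a b) :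
    |mmedian (x ::ₘ S) - mmedian S| ≤ (b - a) / 2 := by
  obtain ⟨k, hk⟩ := hS
  have hk' : (x ::ₘ S).card = 2 * k + 2 := by rw [Multiset.card_cons, hk]
  obtain ⟨p, hp⟩ := Multiset.exists_eraseIdx_sort_cons_eq_sort x S
  have hl := Multiset.pairwise_sort (x ::ₘ S) (· ≤ ·)
  have hlow := hl.getElem_le_getElem_eraseIdx (p := p) (i := k)
    (by rw [hp, Multiset.length_sort]; omega)
  have hupp := hl.getElem_eraseIdx_le_getElem_add_one (p := p) (i := k)
    (by rw [Multiset.length_sort]; omega)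
  simp only [hp] at hlow hupp
  have hxSab : ∀ y ∈ x ::ₘ S, y ∈ Set.Icc a b := Multiset.forall_mem_cons.mpr ⟨hx, hSab⟩
  obtain ⟨hlow_a, -⟩ := hxSab _ (Multiset.getElem_sort_mem (· ≤ ·) (i := k)
    (by rw [Multiset.length_sort]; omega))
  obtain ⟨-, hupp_b⟩ := hxSab _ (Multiset.getElem_sort_mem (· ≤ ·) (i := k + 1)
    (by rw [Multiset.length_sort]; omega))
  rw [mmedian_of_card_eq_two_mul_add_two hk', mmedian_of_card_eq_two_mul_add_one hk, abs_le]
  constructor <;> linarith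

/-- (i) For every odd-size multiset `S ⊆ [0,B]` of size `≥ 3` and every `x ∈ [0,B]`,
`|median(S ∪ {x}) − median(S)| ≤ B/2`; and (ii) this bound is attained.
Together: the global sensitivity of the median under adding one point equals `B/2`. -/
theorem stmt2 (B : ℝ) (hB : 0 < B) :
    (∀ S : Multiset ℝ, 3 ≤ S.card → Odd S.card → (∀ x ∈ S, x ∈ Set.Icc (0 : ℝ) B) →
      ∀ x ∈ Set.Icc (0 : ℝ) B, |mmedian (x ::ₘ S) - mmedian S| ≤ B / 2) ∧
    (∃ S : Multiset ℝ, 3 ≤ S.card ∧ Odd S.card ∧ (∀ x ∈ S, x ∈ Set.Icc (0 : ℝ) B) ∧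
      ∃ x ∈ Set.Icc (0 : ℝ) B, |mmedian (x ::ₘ S) - mmedian S| = B / 2) := by
  refine ⟨fun S _ hS hSB x hx => by simpa using abs_mmedian_cons_sub_mmedian_le hS hSB hx, ?_⟩
  have hS : mmedian ↑[0, B, B] = B := by
    rw [mmedian, Multiset.coe_sort, List.mergeSort_eq_self _ (by simp [hB.le])]
    norm_num
  have hxS : mmedian (0 ::ₘ ↑[0, B, B]) = B / 2 := by
    rw [Multiset.cons_coe, mmedian, Multiset.coe_sort,
      List.mergeSort_eq_self _ (by simp [hB.le])]
    norm_num
  refine ⟨↑[0, B, B], by simp, by simp; decide, by simp [hB.le], 0, ⟨le_rfl, hB.le⟩, ?_⟩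
  rw [hS, hxS, abs_sub_comm, abs_of_nonneg (by linarith)]
  ring
end

section
/- Let G = (V, E, w) be a finite connected undirected weighted graph with all edge weights in [0, B], B > 0, and let e′ be an unordered pair of vertices with e′ ∉ E, assigned a weight w(e′) ∈ [0, B]. Let f denote the minimum spanning tree weight. Then 0 ≤ f(G) − f(G + e′) ≤ B, where G + e′ = (V, E ∪ {e′}) with the given weight on e′. In particular, the MST weight is monotone non-increasing under edge addition and decreases by at most B. -/
/-- The total weight of (the edges of) a graph `T` on a finite vertex set,
with edge weights `w`. -/
noncomputable def treeWeight {V : Type*} [Fintype V] (T : SimpleGraph V) (w : Sym2 V → ℝ) : ℝ :=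
  ∑ e ∈ (Set.toFinite T.edgeSet).toFinset, w e

/-- The minimum spanning tree weight of a graph `G`: the infimum, over spanning trees of `G`
(connected acyclic subgraphs on all vertices), of the total edge weight. -/
noncomputable def mstWeight {V : Type*} [Fintype V] (G : SimpleGraph V) (w : Sym2 V → ℝ) : ℝ :=
  sInf ((fun T => treeWeight T w) '' {T : SimpleGraph V | T ≤ G ∧ T.IsTree})

/-!
Every spanning tree of `G` is one of `G + e'`, so the MST weight can only drop. Conversely, let `T`
be a minimum spanning tree of `G + e'` containing `e' = uv`. Deleting `uv` splits `T` into the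
components of `u` and of `v`; a `u`–`v` walk in `G` has an edge `xy` crossing between them, and
`T - uv + xy` is a spanning tree of `G` of weight `w(T) - w(uv) + w(xy) ≤ f(G + e') + B`.
-/

namespace SimpleGraph

variable {V : Type*}

section Weights

variable [Fintype V] {w : Sym2 V → ℝ}

lemma treeWeight_eq_add_of_edgeSet_eq_insert {T F : SimpleGraph V} {e : Sym2 V}
    (hTF : T.edgeSet = insert e F.edgeSet) (he : e ∉ F.edgeSet) :
    treeWeight T w = w e + treeWeight F w := by
  classical
  have hfin : (Set.toFinite T.edgeSet).toFinset = insert e (Set.toFinite F.edgeSet).toFinset := by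
    ext; simp [hTF]
  rw [treeWeight, treeWeight, hfin, Finset.sum_insert (by simpa using he)]

lemma treeWeight_sup_edge {F : SimpleGraph V} {x y : V} (hxy : x ≠ y) (hF : ¬F.Adj x y) :
    treeWeight (F ⊔ edge x y) w = w s(x, y) + treeWeight F w :=
  treeWeight_eq_add_of_edgeSet_eq_insert
    (by rw [edgeSet_sup, edgeSet_edge_of_ne hxy, Set.union_singleton]) hF

lemma treeWeight_eq_add_deleteEdges {T : SimpleGraph V} {u v : V} (huv : T.Adj u v) :
    treeWeight T w = w s(u, v) + treeWeight (T.deleteEdges {s(u, v)}) w := by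
  have huv : s(u, v) ∈ T.edgeSet := huv
  refine treeWeight_eq_add_of_edgeSet_eq_insert ?_ (by simp)
  rw [edgeSet_deleteEdges, Set.insert_sdiff_singleton, Set.insert_eq_of_mem huv]

lemma mstWeight_le_treeWeight {G T : SimpleGraph V} (hTG : T ≤ G) (hT : T.IsTree) :
    mstWeight G w ≤ treeWeight T w :=
  csInf_le (Set.toFinite _).bddBelow ⟨T, ⟨hTG, hT⟩, rfl⟩

lemma Connected.exists_isTree_treeWeight_eq_mstWeight {G : SimpleGraph V} (hG : G.Connected) :
    ∃ T ≤ G, T.IsTree ∧ treeWeight T w = mstWeight G w := by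
  have hne : {T : SimpleGraph V | T ≤ G ∧ T.IsTree}.Nonempty := hG.exists_isTree_le
  obtain ⟨T, ⟨hTG, hT⟩, hTw⟩ := (hne.image (treeWeight · w)).csInf_mem (Set.toFinite _)
  exact ⟨T, hTG, hT, hTw⟩

lemma mstWeight_anti {G H : SimpleGraph V} (hG : G.Connected) (hGH : G ≤ H) :
    mstWeight H w ≤ mstWeight G w := by
  obtain ⟨T, hTG, hT, hTw⟩ := hG.exists_isTree_treeWeight_eq_mstWeight (w := w)
  exact hTw ▸ mstWeight_le_treeWeight (hTG.trans hGH) hT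

end Weights

section Exchange

variable {G T : SimpleGraph V} {u v : V}

lemma Reachable.reachable_deleteEdges_or {z : V} (h : G.Reachable z u) :
    (G.deleteEdges {s(u, v)}).Reachable z u ∨ (G.deleteEdges {s(u, v)}).Reachable z v := by
  classical
  obtain ⟨P, hP⟩ := h.exists_isPath
  by_cases huvP : s(u, v) ∈ P.edges
  · have hvP := P.snd_mem_support_of_mem_edges huvP
    have huP₁ := Walk.endpoint_notMem_support_takeUntil hP hvP (P.adj_of_mem_edges huvP).ne
    refine .inr ⟨(P.takeUntil v hvP).toDeleteEdges {s(u, v)} fun e he => ?_⟩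
    rintro rfl
    exact huP₁ ((P.takeUntil v hvP).fst_mem_support_of_mem_edges he)
  · exact .inl ⟨P.toDeleteEdges {s(u, v)} fun e he => by rintro rfl; exact huvP he⟩

lemma IsTree.exists_isTree_deleteEdges_sup_edge (hT : T.IsTree) (huv : T.Adj u v)
    (hG : G.Reachable u v) :
    ∃ x y, G.Adj x y ∧ ¬(T.deleteEdges {s(u, v)}).Reachable x y ∧
      (T.deleteEdges {s(u, v)} ⊔ edge x y).IsTree := by
  set F := T.deleteEdges {s(u, v)}
  have hsplit (z : V) : F.Reachable z u ∨ F.Reachable z v :=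
    (hT.connected.preconnected z u).reachable_deleteEdges_or
  have hbridge : ¬F.Reachable u v :=
    isBridge_iff.mp (isAcyclic_iff_forall_adj_isBridge.mp hT.isAcyclic huv)
  obtain ⟨p⟩ := hG
  obtain ⟨⟨⟨x, y⟩, hxy⟩, -, hx, hy⟩ := p.exists_boundary_dart {z | F.Reachable u z} .rfl hbridge
  have hx : F.Reachable u x := hx
  have hy : ¬F.Reachable u y := hy
  have hyv : F.Reachable y v := (hsplit y).resolve_left fun h => hy h.symm
  have hFle : F ≤ F ⊔ edge x y := le_sup_left
  have hadj : (F ⊔ edge x y).Adj x y := .inr ((edge_adj ..).mpr ⟨.inl ⟨rfl, rfl⟩, hxy.ne⟩)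
  have hreach : (F ⊔ edge x y).Reachable u v :=
    ((hx.mono hFle).trans hadj.reachable).trans (hyv.mono hFle)
  have hxy' : ¬F.Reachable x y := fun h => hy (hx.trans h)
  refine ⟨x, y, hxy, hxy', ?_, (hT.isAcyclic.anti sdiff_le).sup_edge_of_not_reachable hxy'⟩
  refine (connected_iff_exists_forall_reachable _).mpr ⟨u, fun z => ?_⟩
  rcases hsplit z with hzu | hzv
  · exact (hzu.mono hFle).symm
  · exact hreach.trans (hzv.mono hFle).symm

end Exchange

lemma mstWeight_le_mstWeight_sup_edge_add [Fintype V] {G : SimpleGraph V} {w : Sym2 V → ℝ}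
    {B : ℝ} {u v : V} (hG : G.Connected) (hB : 0 ≤ B) (hw : ∀ e ∈ G.edgeSet, w e ≤ B)
    (huv : 0 ≤ w s(u, v)) :
    mstWeight G w ≤ mstWeight (G ⊔ edge u v) w + B := by
  obtain ⟨T, hTle, hT, hTw⟩ :=
    (hG.mono le_sup_left).exists_isTree_treeWeight_eq_mstWeight (G := G ⊔ edge u v) (w := w)
  have hFG : T.deleteEdges {s(u, v)} ≤ G := sdiff_le_iff.mpr (sup_comm G _ ▸ hTle)
  by_cases hTuv : T.Adj u v
  · obtain ⟨x, y, hxy, hnr, hT'⟩ :=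
      hT.exists_isTree_deleteEdges_sup_edge hTuv (hG.preconnected u v)
    calc mstWeight G w
        ≤ treeWeight (T.deleteEdges {s(u, v)} ⊔ edge x y) w :=
          mstWeight_le_treeWeight (sup_le hFG ((edge_le_iff G).mpr (.inr hxy))) hT'
      _ = w s(x, y) + treeWeight (T.deleteEdges {s(u, v)}) w :=
          treeWeight_sup_edge hxy.ne fun h => hnr h.reachable
      _ ≤ treeWeight T w + B := by
          rw [treeWeight_eq_add_deleteEdges hTuv]
          linarith [hw s(x, y) hxy]
      _ = mstWeight (G ⊔ edge u v) w + B := by rw [hTw]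
  · rw [deleteEdges, ← edge, sdiff_edge T hTuv] at hFG
    linarith [mstWeight_le_treeWeight (w := w) hFG hT]

end SimpleGraph

theorem stmt4_general {V : Type*} [Fintype V] (B : ℝ)
    (G : SimpleGraph V) (w : Sym2 V → ℝ) (hconn : G.Connected)
    (hw : ∀ e ∈ G.edgeSet, w e ∈ Set.Icc (0 : ℝ) B)
    (u v : V)
    (hwe : w s(u, v) ∈ Set.Icc (0 : ℝ) B) :
    0 ≤ mstWeight G w - mstWeight (G ⊔ SimpleGraph.fromEdgeSet {s(u, v)}) w ∧
      mstWeight G w - mstWeight (G ⊔ SimpleGraph.fromEdgeSet {s(u, v)}) w ≤ B := by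
  obtain ⟨hwe₀, hweB⟩ := hwe
  refine ⟨sub_nonneg.mpr (SimpleGraph.mstWeight_anti hconn le_sup_left), ?_⟩
  exact sub_le_iff_le_add'.mpr <| SimpleGraph.mstWeight_le_mstWeight_sup_edge_add hconn
    (hwe₀.trans hweB) (fun e he => (hw e he).2) hwe₀

/-- Adding one edge `{u,v} ∉ E` with weight in `[0,B]` to a finite connected weighted graph
with weights in `[0,B]` can only decrease the MST weight, and decreases it by at most `B`. -/
theorem stmt4 {V : Type*} [Fintype V] (B : ℝ) (hB : 0 < B)
    (G : SimpleGraph V) (w : Sym2 V → ℝ) (hconn : G.Connected)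
    (hw : ∀ e ∈ G.edgeSet, w e ∈ Set.Icc (0 : ℝ) B)
    (u v : V) (huv : u ≠ v) (he : s(u, v) ∉ G.edgeSet)
    (hwe : w s(u, v) ∈ Set.Icc (0 : ℝ) B) :
    0 ≤ mstWeight G w - mstWeight (G ⊔ SimpleGraph.fromEdgeSet {s(u, v)}) w ∧
      mstWeight G w - mstWeight (G ⊔ SimpleGraph.fromEdgeSet {s(u, v)}) w ≤ B :=
  stmt4_general B G w hconn hw u v hwe
end

section
/- Let E be a real inner product space, n ≥ 1, λ > 0, L ≥ 0. Let F : E → ℝ be differentiable and λ-strongly convex, and let f : E → ℝ be differentiable with ‖∇f(w)‖ ≤ L for all w ∈ E. Define G : E → ℝ by G(w) = (n·F(w) + f(w)) / (n+1). Suppose w₁ ∈ E satisfies ∇F(w₁) = 0 and w₂ ∈ E satisfies ∇G(w₂) = 0. Then ‖w₁ − w₂‖ ≤ ‖∇f(w₂)‖ / (n·λ) ≤ L / (n·λ). -/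
open RealInnerProductSpace

/-- ERM stability via strong convexity: let `F` be differentiable (with gradient `F'`) and
`λ`-strongly convex, and let `f` be differentiable with `‖∇f‖ ≤ L` everywhere. If
`∇F(w₁) = 0` and `w₂` is a stationary point of `G(w) = (n·F(w) + f(w))/(n+1)`, then
`‖w₁ − w₂‖ ≤ ‖∇f(w₂)‖/(n·λ) ≤ L/(n·λ)`. -/
theorem stmt9 {E : Type*} [NormedAddCommGroup E] [InnerProductSpace ℝ E]
    (n : ℕ) (hn : 1 ≤ n) (lam L : ℝ) (hlam : 0 < lam) (hL : 0 ≤ L)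
    (F f : E → ℝ) (F' f' : E → E)
    (hF : ∀ w, HasFDerivAt F (innerSL ℝ (F' w)) w)
    (hf : ∀ w, HasFDerivAt f (innerSL ℝ (f' w)) w)
    (hsc : ∀ w w' : E, F w - F w' ≥ ⟪F' w', w - w'⟫ + lam / 2 * ‖w - w'‖ ^ 2)
    (hfL : ∀ w, ‖f' w‖ ≤ L)
    (w₁ w₂ : E) (hw₁ : F' w₁ = 0)
    (hw₂ : HasFDerivAt (fun w => ((n : ℝ) * F w + f w) / ((n : ℝ) + 1))
      (0 : E →L[ℝ] ℝ) w₂) :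
    ‖w₁ - w₂‖ ≤ ‖f' w₂‖ / ((n : ℝ) * lam) ∧
      ‖f' w₂‖ / ((n : ℝ) * lam) ≤ L / ((n : ℝ) * lam) := by
  have hnpos : (0:ℝ) < n := by exact_mod_cast hn
  have hn1 : ((n:ℝ) + 1) ≠ 0 := by positivity
  -- compute derivative of G at w₂
  have hG : HasFDerivAt (fun w => ((n : ℝ) * F w + f w) / ((n : ℝ) + 1))
      ((((n:ℝ)+1)⁻¹) • ((n:ℝ) • innerSL ℝ (F' w₂) + innerSL ℝ (f' w₂))) w₂ := by
    have h := (((hF w₂).const_mul ((n:ℝ))).add (hf w₂)).const_mul (((n:ℝ)+1)⁻¹)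
    simp only [div_eq_inv_mul]
    exact h
  have hzero : (n:ℝ) • innerSL ℝ (F' w₂) + innerSL ℝ (f' w₂) = 0 := by
    have h := hw₂.unique hG
    have h2 : (((n:ℝ)+1) : ℝ) • ((0 : E →L[ℝ] ℝ)) =
        ((n:ℝ)+1) • ((((n:ℝ)+1)⁻¹) • ((n:ℝ) • innerSL ℝ (F' w₂) + innerSL ℝ (f' w₂))) := by
      rw [h]
    rw [smul_smul, mul_inv_cancel₀ hn1, one_smul, smul_zero] at h2
    exact h2.symm
  -- pointwise: n⟪F' w₂, v⟫ + ⟪f' w₂, v⟫ = 0, so n • F' w₂ + f' w₂ = 0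
  have hvec : (n:ℝ) • F' w₂ + f' w₂ = 0 := by
    apply ext_inner_right ℝ
    intro v
    have := congrFun (congrArg DFunLike.coe hzero) v
    simpa [inner_add_left, real_inner_smul_left] using this
  have hFw2 : F' w₂ = -((n:ℝ)⁻¹) • f' w₂ := by
    have : (n:ℝ) • F' w₂ = -f' w₂ := by
      have := hvec
      rw [add_eq_zero_iff_eq_neg] at this
      exact this
    calc F' w₂ = ((n:ℝ)⁻¹) • ((n:ℝ) • F' w₂) := by
          rw [smul_smul, inv_mul_cancel₀ (ne_of_gt hnpos), one_smul]
      _ = -((n:ℝ)⁻¹) • f' w₂ := by rw [this]; simp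
  -- strong monotonicity
  have h1 := hsc w₁ w₂
  have h2 := hsc w₂ w₁
  have hmono : lam * ‖w₁ - w₂‖ ^ 2 ≤ ⟪F' w₁ - F' w₂, w₁ - w₂⟫ := by
    have hsum : ⟪F' w₂, w₁ - w₂⟫ + ⟪F' w₁, w₂ - w₁⟫ + lam * ‖w₁ - w₂‖^2 ≤ 0 := by
      have hnn : ‖w₂ - w₁‖ = ‖w₁ - w₂‖ := by rw [← norm_neg]; congr 1; abel
      have hl : lam / 2 * ‖w₂ - w₁‖ ^ 2 = lam / 2 * ‖w₁ - w₂‖ ^ 2 := by rw [hnn]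
      linarith [h1, h2]
    have : ⟪F' w₁, w₂ - w₁⟫ = -⟪F' w₁, w₁ - w₂⟫ := by
      rw [← inner_neg_right]; congr 1; abel
    rw [inner_sub_left]
    linarith [hsum, this]
  rw [hw₁] at hmono
  simp only [zero_sub, inner_neg_left] at hmono
  have hkey : lam * ‖w₁ - w₂‖ ^ 2 ≤ (n:ℝ)⁻¹ * (‖f' w₂‖ * ‖w₁ - w₂‖) := by
    calc lam * ‖w₁ - w₂‖ ^ 2 ≤ -⟪F' w₂, w₁ - w₂⟫ := hmono
      _ = (n:ℝ)⁻¹ * ⟪f' w₂, w₁ - w₂⟫ := by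
          rw [hFw2]; rw [real_inner_smul_left]; ring
      _ ≤ (n:ℝ)⁻¹ * (‖f' w₂‖ * ‖w₁ - w₂‖) := by
          apply mul_le_mul_of_nonneg_left (real_inner_le_norm _ _) (by positivity)
  constructor
  · rcases eq_or_lt_of_le (norm_nonneg (w₁ - w₂)) with h0 | h0
    · rw [← h0]; positivity
    · rw [le_div_iff₀ (by positivity : (0:ℝ) < (n:ℝ) * lam)]
      have hk2 : (n:ℝ) * lam * ‖w₁ - w₂‖ ^ 2 ≤ ‖f' w₂‖ * ‖w₁ - w₂‖ := by
        have h := mul_le_mul_of_nonneg_left hkey hnpos.le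
        calc (n:ℝ) * lam * ‖w₁ - w₂‖ ^ 2 = (n:ℝ) * (lam * ‖w₁ - w₂‖ ^ 2) := by ring
          _ ≤ (n:ℝ) * ((n:ℝ)⁻¹ * (‖f' w₂‖ * ‖w₁ - w₂‖)) := h
          _ = ‖f' w₂‖ * ‖w₁ - w₂‖ := by
              rw [← mul_assoc, mul_inv_cancel₀ (ne_of_gt hnpos), one_mul]
      nlinarith [hk2, h0]
  · apply div_le_div_of_nonneg_right (hfL w₂) ?_ |>.trans_eq rfl
    positivity
end

section
/- Let E be a finite-dimensional real inner product space, n ≥ 1, L ≥ 0, M > 0, and λ_R > 0. Let F : E → ℝ be twice continuously differentiable with M-Lipschitz Hessian (‖∇²F(w) − ∇²F(w′)‖_op ≤ M‖w − w′‖ for all w, w′) and with ∇²F(w) ⪰ λ_R·Id for all w ∈ E (i.e., the smallest eigenvalue of every Hessian is at least λ_R). Let f : E → ℝ be differentiable with ‖∇f(w)‖ ≤ L for all w. Let w_R be the minimizer of F (so ∇F(w_R) = 0) and let w_{R'} satisfy ∇G(w_{R'}) = 0 for G(w) = (n·F(w) + f(w))/(n+1). Define the Newton-update point w̄ = w_{R'}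 + (1/n)·(∇²F(w_{R'}))⁻¹·∇f(w_{R'}). Then ‖w_R − w̄‖ ≤ L²·M / (n²·λ_R³). -/
/-!
Stationarity of `G` gives `n F'(w_{R'}) = -∇f(w_{R'})`, so `w̄ = w_{R'} - ∇²F(w_{R'})⁻¹ F'(w_{R'})`
is exactly one Newton step for the equation `F' = 0` started at `w_{R'}`. With an `M`-Lipschitz,
`λ_R`-coercive Hessian Newton's method converges quadratically:
`λ_R ‖w_R - w̄‖ ≤ M ‖w_R - w_{R'}‖²`. Strong convexity makes `F'` strongly monotone, whence
`λ_R ‖w_R - w_{R'}‖ ≤ ‖F'(w_{R'})‖ ≤ L / n`.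
-/

open RealInnerProductSpace

section

variable {E F : Type*} [NormedAddCommGroup E] [NormedSpace ℝ E] [NormedAddCommGroup F]
  [NormedSpace ℝ F]

theorem norm_image_sub_sub_fderiv_le_of_lipschitz {g : E → F} {g' : E → E →L[ℝ] F} {M : ℝ}
    (hg : ∀ w, HasFDerivAt g (g' w) w) (hLip : ∀ w w', ‖g' w - g' w'‖ ≤ M * ‖w - w'‖)
    (hM : 0 ≤ M) (x y : E) : ‖g y - g x - g' x (y - x)‖ ≤ M * ‖y - x‖ ^ 2 := by
  have bound : ∀ w ∈ segment ℝ x y, ‖g' w - g' x‖ ≤ M * ‖y - x‖ := by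
    intro w hw
    have hwx : dist x w ≤ dist x y := by
      linarith [dist_add_dist_of_mem_segment hw, dist_nonneg (x := w) (y := y)]
    rw [dist_comm x w, dist_comm x y, dist_eq_norm, dist_eq_norm] at hwx
    exact (hLip w x).trans (by gcongr)
  have := (convex_segment x y).norm_image_sub_le_of_norm_hasFDerivWithin_le'
    (fun w _ => (hg w).hasFDerivWithinAt) bound (left_mem_segment ℝ x y) (right_mem_segment ℝ x y)
  linarith

end

section

variable {E : Type*} [NormedAddCommGroup E] [InnerProductSpace ℝ E]

theorem mul_norm_le_norm_of_mul_sq_le_inner {c : ℝ} {x y : E} (h : c * ‖x‖ ^ 2 ≤ ⟪y, x⟫) :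
    c * ‖x‖ ≤ ‖y‖ := by
  rcases (norm_nonneg x).eq_or_lt with hx | hx
  · simp [← hx]
  · have : c * ‖x‖ * ‖x‖ ≤ ‖y‖ * ‖x‖ := by nlinarith [real_inner_le_norm y x]
    exact le_of_mul_le_mul_right this hx

theorem mul_norm_sub_sq_le_inner_sub {G : E → E} {H : E → E →L[ℝ] E} {c : ℝ}
    (hG : ∀ w, HasFDerivAt G (H w) w) (hH : ∀ w v, c * ‖v‖ ^ 2 ≤ ⟪H w v, v⟫) (x y : E) :
    c * ‖x - y‖ ^ 2 ≤ ⟪G x - G y, x - y⟫ := by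
  set d := x - y
  have hφ : ∀ t : ℝ, HasDerivAt (fun t : ℝ => ⟪d, G (y + t • d)⟫) ⟪d, H (y + t • d) d⟫ t := by
    intro t
    have hline : HasDerivAt (fun t : ℝ => y + t • d) d t := by
      simpa using ((hasDerivAt_id t).smul_const d).const_add y
    exact (innerSL ℝ d).hasFDerivAt.comp_hasDerivAt t ((hG _).comp_hasDerivAt t hline)
  have hincr := mul_sub_le_image_sub_of_le_deriv (fun t => (hφ t).differentiableAt)
    (fun t => (hφ t).deriv ▸ real_inner_comm d _ ▸ hH (y + t • d) d) zero_le_one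
  have hends : ⟪G x - G y, d⟫ = ⟪d, G (y + (1 : ℝ) • d)⟫ - ⟪d, G (y + (0 : ℝ) • d)⟫ := by
    rw [one_smul, zero_smul, add_zero, add_sub_cancel, inner_sub_left, real_inner_comm d,
      real_inner_comm d]
  linarith

theorem smul_add_eq_zero_of_hasFDerivAt_div_eq_zero {F f : E → ℝ} {p q x : E} {a b : ℝ}
    (hF : HasFDerivAt F (innerSL ℝ p) x) (hf : HasFDerivAt f (innerSL ℝ q) x)
    (h : HasFDerivAt (fun w => (a * F w + f w) / b) (0 : E →L[ℝ] ℝ) x) (hb : b ≠ 0) :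
    a • p + q = 0 := by
  have hsum : HasFDerivAt (fun w => (a * F w + f w) / b) (innerSL ℝ (b⁻¹ • (a • p + q))) x := by
    simpa [div_eq_inv_mul, smul_smul] using ((hF.const_mul a).add hf).const_mul b⁻¹
  have : b⁻¹ • (a • p + q) = 0 := innerSL_inj.mp ((hsum.unique h).trans (map_zero _).symm)
  exact (smul_eq_zero.mp this).resolve_left (inv_ne_zero hb)

theorem mul_norm_sub_newton_step_le {G : E → E} {H : E → E →L[ℝ] E} {c M : ℝ}
    (hG : ∀ w, HasFDerivAt G (H w) w) (hLip : ∀ w w', ‖H w - H w'‖ ≤ M * ‖w - w'‖) (hM : 0 ≤ M)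
    (hH : ∀ w v, c * ‖v‖ ^ 2 ≤ ⟪H w v, v⟫) {x y s : E} (hy : G y = 0) (hs : H x s = G x) :
    c * ‖y - (x - s)‖ ≤ M * ‖y - x‖ ^ 2 :=
  calc c * ‖y - (x - s)‖
      ≤ ‖H x (y - (x - s))‖ := mul_norm_le_norm_of_mul_sq_le_inner (hH _ _)
    _ = ‖G y - G x - H x (y - x)‖ := by
      rw [← norm_neg]
      simp only [hy, map_sub, hs]
      congr 1
      abel
    _ ≤ M * ‖y - x‖ ^ 2 := norm_image_sub_sub_fderiv_le_of_lipschitz hG hLip hM x y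

end

theorem stmt14_general {E : Type*} [NormedAddCommGroup E] [InnerProductSpace ℝ E]
    (n : ℕ) (hn : 1 ≤ n) (L M lamR : ℝ) (hM : 0 < M) (hlamR : 0 < lamR)
    (F f : E → ℝ) (F' f' : E → E) (Hess : E → E →L[ℝ] E)
    (hF : ∀ w, HasFDerivAt F (innerSL ℝ (F' w)) w)
    (hHess : ∀ w, HasFDerivAt F' (Hess w) w)
    (hHessLip : ∀ w w' : E, ‖Hess w - Hess w'‖ ≤ M * ‖w - w'‖)
    (hpos : ∀ w v : E, lamR * ‖v‖ ^ 2 ≤ ⟪Hess w v, v⟫)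
    (hf : ∀ w, HasFDerivAt f (innerSL ℝ (f' w)) w)
    (hfL : ∀ w, ‖f' w‖ ≤ L)
    (wR wR' : E) (hwR : F' wR = 0)
    (hwR' : HasFDerivAt (fun w => ((n : ℝ) * F w + f w) / ((n : ℝ) + 1))
      (0 : E →L[ℝ] ℝ) wR')
    (v : E) (hv : Hess wR' v = f' wR') :
    ‖wR - (wR' + (n : ℝ)⁻¹ • v)‖ ≤ L ^ 2 * M / ((n : ℝ) ^ 2 * lamR ^ 3) := by
  have hn0 : (0 : ℝ) < n := by exact_mod_cast hn
  have hstat : f' wR' = -((n : ℝ) • F' wR') := eq_neg_of_add_eq_zero_right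
    (smul_add_eq_zero_of_hasFDerivAt_div_eq_zero (hF wR') (hf wR') hwR' (by positivity))
  have hgrad : (n : ℝ) * ‖F' wR'‖ ≤ L := by
    simpa [hstat, norm_smul, abs_of_pos hn0] using hfL wR'
  have hdist_grad : lamR * ‖wR - wR'‖ ≤ ‖F' wR'‖ := by
    rw [norm_sub_rev]
    exact mul_norm_le_norm_of_mul_sq_le_inner
      (by simpa [hwR] using mul_norm_sub_sq_le_inner_sub hHess hpos wR' wR)
  have hnewton : lamR * ‖wR - (wR' + (n : ℝ)⁻¹ • v)‖ ≤ M * ‖wR - wR'‖ ^ 2 := by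
    have hstep : Hess wR' (-((n : ℝ)⁻¹ • v)) = F' wR' := by
      rw [map_neg, map_smul, hv, hstat, smul_neg, neg_neg, inv_smul_smul₀ hn0.ne']
    simpa using mul_norm_sub_newton_step_le hHess hHessLip hM.le hpos hwR hstep
  have hdist_le : ‖wR - wR'‖ ≤ L / (n * lamR) := by
    rw [le_div_iff₀ (by positivity)]
    nlinarith
  calc ‖wR - (wR' + (n : ℝ)⁻¹ • v)‖ ≤ M * ‖wR - wR'‖ ^ 2 / lamR := (le_div_iff₀' hlamR).2 hnewton
    _ ≤ M * (L / (n * lamR)) ^ 2 / lamR := by gcongr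
    _ = L ^ 2 * M / ((n : ℝ) ^ 2 * lamR ^ 3) := by field_simp

/-- Newton-step unlearning bound: in a finite-dimensional real inner product space, let `F` be
twice continuously differentiable with gradient `F'` and Hessian `Hess` that is `M`-Lipschitz
and satisfies `Hess(w) ⪰ λ_R·Id` everywhere, and let `f` have gradient bounded by `L`. Let
`w_R` be the minimizer of `F` (so `∇F(w_R) = 0`) and `w_{R'}` stationary for
`G(w) = (n·F(w) + f(w))/(n+1)`. Then the Newton-update point
`w̄ = w_{R'} + (1/n)·(Hess(w_{R'}))⁻¹∇f(w_{R'})` (expressed via any solution `v` of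
`Hess(w_{R'}) v = ∇f(w_{R'})`) satisfies `‖w_R − w̄‖ ≤ L²M/(n²λ_R³)`. -/
theorem stmt14 {E : Type*} [NormedAddCommGroup E] [InnerProductSpace ℝ E]
    [FiniteDimensional ℝ E]
    (n : ℕ) (hn : 1 ≤ n) (L M lamR : ℝ) (hL : 0 ≤ L) (hM : 0 < M) (hlamR : 0 < lamR)
    (F f : E → ℝ) (F' f' : E → E) (Hess : E → E →L[ℝ] E)
    (hF : ∀ w, HasFDerivAt F (innerSL ℝ (F' w)) w)
    (hHess : ∀ w, HasFDerivAt F' (Hess w) w)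
    (hHessLip : ∀ w w' : E, ‖Hess w - Hess w'‖ ≤ M * ‖w - w'‖)
    (hpos : ∀ w v : E, lamR * ‖v‖ ^ 2 ≤ ⟪Hess w v, v⟫)
    (hf : ∀ w, HasFDerivAt f (innerSL ℝ (f' w)) w)
    (hfL : ∀ w, ‖f' w‖ ≤ L)
    (wR wR' : E) (hwR : F' wR = 0) (hwRmin : ∀ w, F wR ≤ F w)
    (hwR' : HasFDerivAt (fun w => ((n : ℝ) * F w + f w) / ((n : ℝ) + 1))
      (0 : E →L[ℝ] ℝ) wR')
    (v : E) (hv : Hess wR' v = f' wR') :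
    ‖wR - (wR' + (n : ℝ)⁻¹ • v)‖ ≤ L ^ 2 * M / ((n : ℝ) ^ 2 * lamR ^ 3) :=
  stmt14_general n hn L M lamR hM hlamR F f F' f' Hess hF hHess hHessLip hpos hf hfL wR wR' hwR hwR'
    v hv
end

section
/- Let P be a d×d real symmetric orthogonal projection matrix of rank k (so P² = P = Pᵀ, with eigenvalue 1 of multiplicity k and eigenvalue 0 of multiplicity d − k), and let E be any d×d real symmetric matrix. Let the eigenvalues of P + E be λ_1 ≥ ⋯ ≥ λ_d with corresponding orthonormal eigenvectors u_1, …, u_d, and let P̂ = Σ_{i=1}^{k} u_i u_iᵀ be the orthogonal projection onto a span of eigenvectors of P + E associated with its k largest eigenvalues. Then ‖P − P̂‖_op ≤ 2·‖E‖_op. -/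
open Matrix

/-- The Euclidean (ℓ²) norm of a vector in `ℝ^d`. -/
noncomputable def euclNorm {d : ℕ} (x : Fin d → ℝ) : ℝ :=
  Real.sqrt (∑ j, x j ^ 2)

/-- The operator (spectral) norm of a `d×d` real matrix, with respect to the Euclidean norm. -/
noncomputable def matOpNorm {d : ℕ} (M : Matrix (Fin d) (Fin d) ℝ) : ℝ :=
  sSup {r : ℝ | ∃ v : Fin d → ℝ, euclNorm v ≤ 1 ∧ r = euclNorm (M.mulVec v)}

/-!
Transported to `EuclideanSpace ℝ (Fin d)`, the matrices `P`, `E`, `P̂` become operators `p`, `e`,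
`q`, with `p` an orthogonal projection of rank `k`, and `matOpNorm` becomes the operator norm. In the
orthonormal eigenbasis `u` of `p + e`, the operator `p + e - q` is diagonal with entries `λ_i - 1`
(`i < k`) and `λ_i` (`i ≥ k`). Weyl's inequality bounds these by `‖e‖`: by dimension counting, for
`i ≥ k` the span of `u_0, …, u_i` meets `ker p`, for `i < k` the span of `u_i, …, u_{d-1}` meets
`range p`, and on these subspaces the quadratic form of `p + e` is within `‖e‖` of `0`, resp. `1`.
Hence `‖p + e - q‖ ≤ ‖e‖`, and the triangle inequality gives `‖p - q‖ ≤ 2 ‖e‖`.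
-/

open scoped RealInnerProductSpace
open Module

namespace OrthonormalBasis

variable {E : Type*} [NormedAddCommGroup E] [InnerProductSpace ℝ E]

section Fintype

variable {ι : Type*} [Fintype ι] (b : OrthonormalBasis ι ℝ E) {μ : ι → ℝ}

theorem inner_apply_of_apply_eq_smul {T : E →ₗ[ℝ] E} (hT : ∀ j, T (b j) = μ j • b j) (i : ι)
    (x : E) : ⟪b i, T x⟫ = μ i * ⟪b i, x⟫ := by
  classical
  conv_lhs => rw [← b.sum_repr' x]
  simp only [map_sum, map_smul, hT, inner_sum, inner_smul_right, b.inner_eq_ite]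
  simp [mul_comm]

theorem inner_self_apply_eq_sum {T : E →ₗ[ℝ] E} (hT : ∀ j, T (b j) = μ j • b j) (x : E) :
    ⟪x, T x⟫ = ∑ j, μ j * ⟪b j, x⟫ ^ 2 := by
  rw [← b.sum_inner_mul_inner]
  refine Finset.sum_congr rfl fun j _ => ?_
  rw [b.inner_apply_of_apply_eq_smul hT, real_inner_comm]
  ring

theorem opNorm_le_of_apply_eq_smul {T : E →L[ℝ] E} (hT : ∀ j, T (b j) = μ j • b j) {c : ℝ}
    (hc : 0 ≤ c) (hμ : ∀ j, |μ j| ≤ c) : ‖T‖ ≤ c := by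
  refine T.opNorm_le_bound hc fun x => ?_
  have hsq : ‖T x‖ ^ 2 ≤ (c * ‖x‖) ^ 2 := by
    rw [← b.sum_sq_inner_right, mul_pow, ← b.sum_sq_inner_right, Finset.mul_sum]
    refine Finset.sum_le_sum fun j _ => ?_
    rw [show ⟪b j, T x⟫ = μ j * ⟪b j, x⟫ from
      b.inner_apply_of_apply_eq_smul (T := T.toLinearMap) hT j x, mul_pow]
    exact mul_le_mul_of_nonneg_right (sq_le_sq' (abs_le.mp (hμ j)).1 (abs_le.mp (hμ j)).2)
      (sq_nonneg _)
  exact (pow_le_pow_iff_left₀ (norm_nonneg _) (by positivity) two_ne_zero).mp hsq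

theorem inner_eq_zero_of_mem_span {S : Finset ι} {x : E}
    (hx : x ∈ Submodule.span ℝ (Set.range fun j : S => b j)) {i : ι} (hi : i ∉ S) :
    ⟪b i, x⟫ = 0 := by
  refine Submodule.mem_orthogonal_singleton_iff_inner_right.mp (Submodule.span_le.mpr ?_ hx)
  rintro _ ⟨j, rfl⟩
  exact Submodule.mem_orthogonal_singleton_iff_inner_right.mpr
    (b.orthonormal.inner_eq_zero fun h => hi (h ▸ j.2))

theorem finrank_span_subfamily (S : Finset ι) :
    finrank ℝ (Submodule.span ℝ (Set.range fun j : S => b j)) = S.card :=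
  (finrank_span_eq_card (b.orthonormal.linearIndependent.comp _ Subtype.val_injective)).trans
    (Fintype.card_coe S)

theorem exists_ne_zero_mem_inner_eq_zero [FiniteDimensional ℝ E] (S : Finset ι)
    (W : Submodule ℝ E) (hW : finrank ℝ E < S.card + finrank ℝ W) :
    ∃ x ∈ W, x ≠ 0 ∧ ∀ i ∉ S, ⟪b i, x⟫ = 0 := by
  have hnd : ¬Disjoint (Submodule.span ℝ (Set.range fun j : S => b j)) W := fun h =>
    hW.not_ge (b.finrank_span_subfamily S ▸ Submodule.finrank_add_finrank_le_of_disjoint h)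
  obtain ⟨x, hxS, hxW, hx⟩ := by simpa [Submodule.disjoint_def] using hnd
  exact ⟨x, hxW, hx, fun i hi => b.inner_eq_zero_of_mem_span hxS hi⟩

end Fintype

section Weyl

variable {n : ℕ} [FiniteDimensional ℝ E] (b : OrthonormalBasis (Fin n) ℝ E) {T : E →ₗ[ℝ] E}
  {lam : Fin n → ℝ}

theorem eigenvalue_le_of_forall_inner_le (hT : ∀ j, T (b j) = lam j • b j) (hlam : Antitone lam)
    {i : Fin n} {W : Submodule ℝ E} (hW : n < i + 1 + finrank ℝ W) {c : ℝ}
    (hc : ∀ x ∈ W, ⟪x, T x⟫ ≤ c * ‖x‖ ^ 2) : lam i ≤ c := by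
  obtain ⟨x, hxW, hx, hxS⟩ := b.exists_ne_zero_mem_inner_eq_zero (Finset.Iic i) W
    (by rwa [Fin.card_Iic, finrank_eq_card_basis b.toBasis, Fintype.card_fin])
  have hlow : lam i * ‖x‖ ^ 2 ≤ ⟪x, T x⟫ := by
    rw [b.inner_self_apply_eq_sum hT, ← b.sum_sq_inner_right, Finset.mul_sum]
    refine Finset.sum_le_sum fun j _ => ?_
    by_cases hj : j ≤ i
    · exact mul_le_mul_of_nonneg_right (hlam hj) (sq_nonneg _)
    · simp [hxS j (by simpa using hj)]
  exact le_of_mul_le_mul_right (hlow.trans (hc x hxW)) (by positivity)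

theorem le_eigenvalue_of_forall_le_inner (hT : ∀ j, T (b j) = lam j • b j) (hlam : Antitone lam)
    {i : Fin n} {W : Submodule ℝ E} (hW : n < n - i + finrank ℝ W) {c : ℝ}
    (hc : ∀ x ∈ W, c * ‖x‖ ^ 2 ≤ ⟪x, T x⟫) : c ≤ lam i := by
  obtain ⟨x, hxW, hx, hxS⟩ := b.exists_ne_zero_mem_inner_eq_zero (Finset.Ici i) W
    (by rwa [Fin.card_Ici, finrank_eq_card_basis b.toBasis, Fintype.card_fin])
  have hup : ⟪x, T x⟫ ≤ lam i * ‖x‖ ^ 2 := by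
    rw [b.inner_self_apply_eq_sum hT, ← b.sum_sq_inner_right, Finset.mul_sum]
    refine Finset.sum_le_sum fun j _ => ?_
    by_cases hj : i ≤ j
    · exact mul_le_mul_of_nonneg_right (hlam hj) (sq_nonneg _)
    · simp [hxS j (by simpa using hj)]
  exact le_of_mul_le_mul_right ((hc x hxW).trans hup) (by positivity)

end Weyl

end OrthonormalBasis

theorem ContinuousLinearMap.abs_inner_apply_self_le {E : Type*} [NormedAddCommGroup E]
    [InnerProductSpace ℝ E] (T : E →L[ℝ] E) (x : E) : |⟪x, T x⟫| ≤ ‖T‖ * ‖x‖ ^ 2 :=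
  calc |⟪x, T x⟫| ≤ ‖x‖ * ‖T x‖ := abs_real_inner_le_norm x (T x)
    _ ≤ ‖x‖ * (‖T‖ * ‖x‖) := by gcongr; exact T.le_opNorm x
    _ = ‖T‖ * ‖x‖ ^ 2 := by ring

namespace IsStarProjection

variable {E : Type*} [NormedAddCommGroup E] [InnerProductSpace ℝ E] [FiniteDimensional ℝ E]
  {p e : E →L[ℝ] E}

theorem inner_apply_self_le (hp : IsStarProjection p) (x : E) : ⟪x, p x⟫ ≤ ‖x‖ ^ 2 :=
  calc ⟪x, p x⟫ ≤ ‖p‖ * ‖x‖ ^ 2 := (abs_le.mp (p.abs_inner_apply_self_le x)).2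
    _ ≤ 1 * ‖x‖ ^ 2 := by gcongr; exact hp.norm_le
    _ = ‖x‖ ^ 2 := one_mul _

theorem abs_eigenvalue_sub_le {n k : ℕ} (hp : IsStarProjection p)
    (hk : finrank ℝ p.range = k) (b : OrthonormalBasis (Fin n) ℝ E) {lam : Fin n → ℝ}
    (hT : ∀ i, (p + e) (b i) = lam i • b i) (hlam : Antitone lam) (i : Fin n) :
    |lam i - if (i : ℕ) < k then 1 else 0| ≤ ‖e‖ := by
  have hn : finrank ℝ E = n := by rw [finrank_eq_card_basis b.toBasis, Fintype.card_fin]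
  have htop : finrank ℝ (⊤ : Submodule ℝ E) = n := finrank_top ℝ E ▸ hn
  have hker : finrank ℝ p.ker = n - k := by
    have := LinearMap.finrank_range_add_finrank_ker p.toLinearMap
    omega
  have hkn : k ≤ n := hk ▸ hn ▸ Submodule.finrank_le _
  have hi := i.isLt
  have he (x : E) := abs_le.mp (e.abs_inner_apply_self_le x)
  have hquad (x : E) : ⟪x, (p + e) x⟫ = ⟪x, p x⟫ + ⟪x, e x⟫ := inner_add_right _ _ _
  have hle_top (x : E) : ⟪x, (p + e) x⟫ ≤ (1 + ‖e‖) * ‖x‖ ^ 2 := by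
    linarith [hquad x, (he x).2, hp.inner_apply_self_le x]
  have hge_top (x : E) : -‖e‖ * ‖x‖ ^ 2 ≤ ⟪x, (p + e) x⟫ := by
    linarith [hquad x, (he x).1,
      (ContinuousLinearMap.IsPositive.of_isStarProjection hp).inner_nonneg_right x]
  have hge_range (x : E) (hx : x ∈ p.range) : (1 - ‖e‖) * ‖x‖ ^ 2 ≤ ⟪x, (p + e) x⟫ := by
    have hpx : p x = x := by
      obtain ⟨y, rfl⟩ := hx
      exact congr($hp.isIdempotentElem y)
    rw [hquad, hpx, real_inner_self_eq_norm_sq]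
    linarith [(he x).1]
  have hle_ker (x : E) (hx : x ∈ p.ker) : ⟪x, (p + e) x⟫ ≤ ‖e‖ * ‖x‖ ^ 2 := by
    rw [hquad, show p x = 0 from hx, inner_zero_right, zero_add]
    exact (he x).2
  split_ifs with hik
  · have := b.le_eigenvalue_of_forall_le_inner hT hlam (i := i) (by omega) hge_range
    have := b.eigenvalue_le_of_forall_inner_le hT hlam (i := i) (W := ⊤) (by omega)
      fun x _ => hle_top x
    rw [abs_le]
    constructor <;> linarith
  · have := b.le_eigenvalue_of_forall_le_inner hT hlam (i := i) (W := ⊤) (by omega)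
      fun x _ => hge_top x
    have := b.eigenvalue_le_of_forall_inner_le hT hlam (i := i) (by omega) hle_ker
    rw [sub_zero, abs_le]
    constructor <;> linarith

theorem norm_sub_le_two_mul_of_eigenbasis {n k : ℕ} (hp : IsStarProjection p)
    (hk : finrank ℝ p.range = k) (b : OrthonormalBasis (Fin n) ℝ E) {q : E →L[ℝ] E}
    (hq : ∀ i, q (b i) = if (i : ℕ) < k then b i else 0) {lam : Fin n → ℝ}
    (hT : ∀ i, (p + e) (b i) = lam i • b i) (hlam : Antitone lam) :
    ‖p - q‖ ≤ 2 * ‖e‖ := by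
  have hdiag : ‖p + e - q‖ ≤ ‖e‖ := by
    refine b.opNorm_le_of_apply_eq_smul (fun i => ?_) (norm_nonneg e)
      (hp.abs_eigenvalue_sub_le hk b hT hlam)
    rw [_root_.sub_apply, hT, hq, sub_smul]
    split_ifs <;> simp
  calc ‖p - q‖ = ‖(p + e - q) - e‖ := by congr 1; abel
    _ ≤ ‖p + e - q‖ + ‖e‖ := norm_sub_le _ _
    _ ≤ 2 * ‖e‖ := by linarith

end IsStarProjection

theorem euclNorm_eq_norm_toLp {d : ℕ} (x : Fin d → ℝ) : euclNorm x = ‖WithLp.toLp 2 x‖ := by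
  simp [euclNorm, EuclideanSpace.norm_eq]

theorem matOpNorm_eq_norm_toEuclideanCLM {d : ℕ} (M : Matrix (Fin d) (Fin d) ℝ) :
    matOpNorm M = ‖toEuclideanCLM (𝕜 := ℝ) M‖ := by
  rw [← ContinuousLinearMap.sSup_unitClosedBall_eq_norm, matOpNorm]
  congr 1
  ext r
  simp only [Set.mem_ofPred_eq, Set.mem_image, Metric.mem_closedBall, dist_zero_right]
  constructor
  · rintro ⟨v, hv, rfl⟩
    exact ⟨WithLp.toLp 2 v, by rwa [← euclNorm_eq_norm_toLp], by simp [euclNorm_eq_norm_toLp]⟩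
  · rintro ⟨v, hv, rfl⟩
    exact ⟨v.ofLp, by rwa [euclNorm_eq_norm_toLp], by rw [euclNorm_eq_norm_toLp]; rfl⟩

theorem orthonormal_toLp_of_dotProduct_eq_ite {ι n : Type*} [Fintype n] [DecidableEq ι]
    {u : ι → n → ℝ} (hu : ∀ i j, u i ⬝ᵥ u j = if i = j then (1 : ℝ) else 0) :
    Orthonormal ℝ fun i => WithLp.toLp 2 (u i) :=
  orthonormal_iff_ite.mpr fun i j => by
    rw [EuclideanSpace.inner_toLp_toLp, star_trivial, dotProduct_comm, hu]

theorem sum_vecMulVec_mulVec_of_dotProduct_eq_ite {ι n : Type*} [Fintype n] [DecidableEq ι]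
    {u : ι → n → ℝ} (hu : ∀ i j, u i ⬝ᵥ u j = if i = j then (1 : ℝ) else 0) (S : Finset ι)
    (j : ι) : (∑ i ∈ S, vecMulVec (u i) (u i)) *ᵥ u j = if j ∈ S then u j else 0 := by
  simp only [sum_mulVec, vecMulVec_mulVec, hu, op_smul_eq_smul, ite_smul, one_smul, zero_smul,
    Finset.sum_ite_eq']

theorem stmt16_general (d k : ℕ) (P Emat : Matrix (Fin d) (Fin d) ℝ)
    (hPsymm : P.IsSymm) (hPproj : P * P = P) (hPrank : P.rank = k)
    (lam : Fin d → ℝ) (u : Fin d → Fin d → ℝ)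
    (hlam : ∀ i j : Fin d, i ≤ j → lam j ≤ lam i)
    (hortho : ∀ i j, u i ⬝ᵥ u j = if i = j then (1 : ℝ) else 0)
    (heig : ∀ i, (P + Emat).mulVec (u i) = lam i • u i) :
    matOpNorm (P - ∑ i ∈ Finset.univ.filter (fun i : Fin d => (i : ℕ) < k),
        vecMulVec (u i) (u i)) ≤ 2 * matOpNorm Emat := by
  have hon := orthonormal_toLp_of_dotProduct_eq_ite hortho
  let b : OrthonormalBasis (Fin d) ℝ (EuclideanSpace ℝ (Fin d)) :=
    .mk hon (hon.linearIndependent.span_eq_top_of_card_eq_finrank' (by simp)).ge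
  have hb (i : Fin d) : b i = WithLp.toLp 2 (u i) := by simp [b]
  have hp : IsStarProjection (toEuclideanCLM (𝕜 := ℝ) P) :=
    IsStarProjection.map ⟨hPproj, (isHermitian_iff_isSymm.mpr hPsymm).isSelfAdjoint⟩ _
  have hk : finrank ℝ (toEuclideanCLM (𝕜 := ℝ) P).range = k := by
    rw [← hPrank, rank_eq_finrank_range_toLin P (EuclideanSpace.basisFun (Fin d) ℝ).toBasis
      (EuclideanSpace.basisFun (Fin d) ℝ).toBasis]
    rfl
  rw [matOpNorm_eq_norm_toEuclideanCLM, matOpNorm_eq_norm_toEuclideanCLM, map_sub]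
  refine hp.norm_sub_le_two_mul_of_eigenbasis hk b (fun i => ?_) (fun i => ?_) hlam
  · rw [hb, toEuclideanCLM_toLp, sum_vecMulVec_mulVec_of_dotProduct_eq_ite hortho]
    simp only [Finset.mem_filter, Finset.mem_univ, true_and, apply_ite (WithLp.toLp 2),
      WithLp.toLp_zero]
  · rw [← map_add, hb, toEuclideanCLM_toLp, heig, WithLp.toLp_smul]

/-- Distortion of the rank-`k` spectral truncation: let `P` be a `d×d` symmetric orthogonal
projection of rank `k` and `E` any symmetric matrix. If `u_1,…,u_d` is an orthonormal
eigenbasis of `P + E` with eigenvalues sorted in decreasing order, and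
`P̂ = Σ_{i<k} u_i u_iᵀ` is the projection onto the span of eigenvectors of the `k` largest
eigenvalues, then `‖P − P̂‖_op ≤ 2·‖E‖_op`. -/
theorem stmt16 (d k : ℕ) (P Emat : Matrix (Fin d) (Fin d) ℝ)
    (hPsymm : P.IsSymm) (hPproj : P * P = P) (hPrank : P.rank = k)
    (hEsymm : Emat.IsSymm)
    (lam : Fin d → ℝ) (u : Fin d → Fin d → ℝ)
    (hlam : ∀ i j : Fin d, i ≤ j → lam j ≤ lam i)
    (hortho : ∀ i j, u i ⬝ᵥ u j = if i = j then (1 : ℝ) else 0)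
    (heig : ∀ i, (P + Emat).mulVec (u i) = lam i • u i) :
    matOpNorm (P - ∑ i ∈ Finset.univ.filter (fun i : Fin d => (i : ℕ) < k),
        vecMulVec (u i) (u i)) ≤ 2 * matOpNorm Emat :=
  stmt16_general d k P Emat hPsymm hPproj hPrank lam u hlam hortho heig
end
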